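/- For every smooth f : G → ℝ and every x ∈ G: (i) Γ₂^Z(f)(x) = Σ_{j=1}^n Σ_{ℓ=1}^d ( X_j(Z_ℓ f)(x) )², and (ii) Σ_{j=1}^n ( Σ_{i=1}^n X_i(W_{ij} f)(x) )² ≤ ‖ω‖₂² · Γ₂^Z(f)(x), where W_{ij}f(x) := f'(x)(0, ω(e_i,e_j)) = Σ_{ℓ=1}^d ⟨ω(e_i,e_j), f_ℓ⟩_𝐂 · Z_ℓ f(x). -/

import Mathlib

noncomputable section

variable {V C : Type*} [NormedAddCommGroup V] [InnerProductSpace ℝ V] [FiniteDimensional ℝ V]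
  [NormedAddCommGroup C] [InnerProductSpace ℝ C] [FiniteDimensional ℝ C]

/-- The horizontal (left-invariant) derivative on the finite-dimensional
Heisenberg-like group `G = V × 𝐂`: `(X_{v₀} f)(x) = f'(x)(v₀, ½ ω(x₁, v₀))`. -/
def Xd (ω : V →L[ℝ] V →L[ℝ] C) (v₀ : V) (f : V × C → ℝ) : V × C → ℝ :=
  fun x => fderiv ℝ f x (v₀, (1 / 2 : ℝ) • ω x.1 v₀)

/-- The vertical derivative on `G = V × 𝐂`: `(Z_{c₀} f)(x) = f'(x)(0, c₀)`. -/
def Zd (c₀ : C) (f : V × C → ℝ) : V × C → ℝ :=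
  fun x => fderiv ℝ f x (0, c₀)

/-- The sub-Laplacian `L f = Σ_i X_i(X_i f)`. -/
def Ld {n : ℕ} (ω : V →L[ℝ] V →L[ℝ] C) (e : OrthonormalBasis (Fin n) ℝ V)
    (f : V × C → ℝ) : V × C → ℝ :=
  fun x => ∑ i, Xd ω (e i) (Xd ω (e i) f) x

/-- The horizontal carré du champ `Γ(f,g) = Σ_i (X_i f)(X_i g)`. -/
def GammaH {n : ℕ} (ω : V →L[ℝ] V →L[ℝ] C) (e : OrthonormalBasis (Fin n) ℝ V)
    (f g : V × C → ℝ) : V × C → ℝ :=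
  fun x => ∑ i, Xd ω (e i) f x * Xd ω (e i) g x

/-- The vertical carré du champ `Γ^Z(f,g) = Σ_ℓ (Z_ℓ f)(Z_ℓ g)`. -/
def GammaZ {d : ℕ} (fb : OrthonormalBasis (Fin d) ℝ C)
    (f g : V × C → ℝ) : V × C → ℝ :=
  fun x => ∑ ℓ, Zd (fb ℓ) f x * Zd (fb ℓ) g x

/-- `Γ₂(f) = ½(L Γ(f) − 2 Γ(f, Lf))`. -/
def Gamma2H {n : ℕ} (ω : V →L[ℝ] V →L[ℝ] C) (e : OrthonormalBasis (Fin n) ℝ V)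
    (f : V × C → ℝ) : V × C → ℝ :=
  fun x => (1 / 2 : ℝ) * (Ld ω e (GammaH ω e f f) x - 2 * GammaH ω e f (Ld ω e f) x)

/-- `Γ₂^Z(f) = ½(L Γ^Z(f) − 2 Γ^Z(f, Lf))`. -/
def Gamma2Z {n d : ℕ} (ω : V →L[ℝ] V →L[ℝ] C) (e : OrthonormalBasis (Fin n) ℝ V)
    (fb : OrthonormalBasis (Fin d) ℝ C) (f : V × C → ℝ) : V × C → ℝ :=
  fun x => (1 / 2 : ℝ) * (Ld ω e (GammaZ fb f f) x - 2 * GammaZ fb f (Ld ω e f) x)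

/-- The vertical derivative `W_{ij} f (x) = f'(x)(0, ω(v₁, v₂))`. -/
def Wd (ω : V →L[ℝ] V →L[ℝ] C) (v₁ v₂ : V) (f : V × C → ℝ) : V × C → ℝ :=
  fun x => fderiv ℝ f x (0, ω v₁ v₂)

set_option linter.unusedSectionVars false

namespace HeisAux
variable {n d : ℕ} (ω : V →L[ℝ] V →L[ℝ] C)

def Bmap (v : V) : V × C →L[ℝ] V × C :=
  ContinuousLinearMap.prod 0 ((1 / 2 : ℝ) • ((ω.flip v).comp (ContinuousLinearMap.fst ℝ V C)))

lemma Bmap_apply (v : V) (u : V × C) : Bmap ω v u = (0, (1 / 2 : ℝ) • ω u.1 v) := rfl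

def svec (v : V) (x : V × C) : V × C := (v, (1 / 2 : ℝ) • ω x.1 v)

lemma svec_eq (v : V) (x : V × C) : svec ω v x = ((v, 0) : V × C) + Bmap ω v x := by
  simp [svec, Bmap_apply, Prod.ext_iff]

lemma Xd_eq (v : V) (f : V × C → ℝ) (x : V × C) : Xd ω v f x = fderiv ℝ f x (svec ω v x) := rfl

variable {f : V × C → ℝ}

lemma hasFDerivAt_Xd (hf : ContDiff ℝ (⊤ : ℕ∞) f) (v : V) (x : V × C) :
    HasFDerivAt (Xd ω v f)
      ((fderiv ℝ f x).comp (Bmap ω v) + (fderiv ℝ (fderiv ℝ f) x).flip (svec ω v x)) x := by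
  have h1 : HasFDerivAt (fderiv ℝ f) (fderiv ℝ (fderiv ℝ f) x) x :=
    (((hf.fderiv_right (m := 1) (WithTop.coe_le_coe.mpr le_top)).differentiable one_ne_zero) x).hasFDerivAt
  have h2 : HasFDerivAt (fun y : V × C => ((v, 0) : V × C) + Bmap ω v y) (Bmap ω v) x := by
    exact ((hasFDerivAt_const ((v, 0) : V × C) x).add (Bmap ω v).hasFDerivAt).congr_fderiv (zero_add _)
  have := h1.clm_apply h2
  have he : (fun y => fderiv ℝ f y (((v, 0) : V × C) + Bmap ω v y)) = Xd ω v f := by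
    funext y; rw [Xd_eq, svec_eq]
  rw [he] at this
  simpa [svec_eq] using this

set_option linter.unusedSectionVars false

lemma fderiv_Xd_apply (hf : ContDiff ℝ (⊤ : ℕ∞) f) (v : V) (x u : V × C) :
    fderiv ℝ (Xd ω v f) x u
      = fderiv ℝ (fderiv ℝ f) x u (svec ω v x) + fderiv ℝ f x (Bmap ω v u) := by
  rw [(hasFDerivAt_Xd ω hf v x).fderiv]
  simp [add_comm]

lemma hasFDerivAt_Zd (hf : ContDiff ℝ (⊤ : ℕ∞) f) (c : C) (x : V × C) :
    HasFDerivAt (Zd c f) ((fderiv ℝ (fderiv ℝ f) x).flip ((0 : V), c)) x := by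
  have h1 : HasFDerivAt (fderiv ℝ f) (fderiv ℝ (fderiv ℝ f) x) x :=
    (((hf.fderiv_right (m := 1) (WithTop.coe_le_coe.mpr le_top)).differentiable one_ne_zero) x).hasFDerivAt
  have := h1.clm_apply (hasFDerivAt_const (((0 : V), c) : V × C) x)
  simp at this; exact this

lemma fderiv_Zd_apply (hf : ContDiff ℝ (⊤ : ℕ∞) f) (c : C) (x u : V × C) :
    fderiv ℝ (Zd c f) x u = fderiv ℝ (fderiv ℝ f) x u ((0 : V), c) := by
  rw [(hasFDerivAt_Zd hf c x).fderiv]; rfl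


lemma d2_symm (hf : ContDiff ℝ (⊤ : ℕ∞) f) (x a b : V × C) :
    fderiv ℝ (fderiv ℝ f) x a b = fderiv ℝ (fderiv ℝ f) x b a :=
  second_derivative_symmetric
    (fun y => ((hf.differentiable (by simp)) y).hasFDerivAt)
    ((((hf.fderiv_right (m := 1) (WithTop.coe_le_coe.mpr le_top)).differentiable one_ne_zero) x).hasFDerivAt) a b

lemma contDiff_Xd (hf : ContDiff ℝ (⊤ : ℕ∞) f) (v : V) : ContDiff ℝ (⊤ : ℕ∞) (Xd ω v f) := by
  have : Xd ω v f = fun x => fderiv ℝ f x (((v, 0) : V × C) + Bmap ω v x) := by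
    funext y; rw [Xd_eq, svec_eq]
  rw [this]
  exact (hf.fderiv_right (by simp)).clm_apply (contDiff_const.add (Bmap ω v).contDiff)

lemma contDiff_Zd (hf : ContDiff ℝ (⊤ : ℕ∞) f) (c : C) : ContDiff ℝ (⊤ : ℕ∞) (Zd c f) :=
  (hf.fderiv_right (by simp)).clm_apply contDiff_const

lemma Xd_Zd (hf : ContDiff ℝ (⊤ : ℕ∞) f) (v : V) (c : C) (x : V × C) :
    Xd ω v (Zd c f) x = fderiv ℝ (fderiv ℝ f) x (svec ω v x) ((0 : V), c) := by
  rw [Xd_eq, fderiv_Zd_apply hf]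

lemma Zd_Xd (hf : ContDiff ℝ (⊤ : ℕ∞) f) (v : V) (c : C) (x : V × C) :
    Zd c (Xd ω v f) x = Xd ω v (Zd c f) x := by
  rw [Zd, fderiv_Xd_apply ω hf, Xd_Zd ω hf]
  have : Bmap ω v (((0 : V), c) : V × C) = 0 := by simp [Bmap_apply]
  rw [this, map_zero, add_zero, d2_symm hf]


variable {g h : V × C → ℝ} {x : V × C}

lemma Xd_sum {ι : Type*} (s : Finset ι) (g : ι → (V × C → ℝ)) (v : V)
    (hg : ∀ i ∈ s, DifferentiableAt ℝ (g i) x) :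
    Xd ω v (fun y => ∑ i ∈ s, g i y) x = ∑ i ∈ s, Xd ω v (g i) x := by
  simp only [Xd_eq, fderiv_fun_sum hg, ContinuousLinearMap.sum_apply]

lemma Zd_sum {ι : Type*} (s : Finset ι) (g : ι → (V × C → ℝ)) (c : C)
    (hg : ∀ i ∈ s, DifferentiableAt ℝ (g i) x) :
    Zd c (fun y => ∑ i ∈ s, g i y) x = ∑ i ∈ s, Zd c (g i) x := by
  simp only [Zd, fderiv_fun_sum hg, ContinuousLinearMap.sum_apply]

lemma Xd_mul (v : V) (hg : DifferentiableAt ℝ g x) (hh : DifferentiableAt ℝ h x) :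
    Xd ω v (fun y => g y * h y) x = g x * Xd ω v h x + h x * Xd ω v g x := by
  simp only [Xd_eq, fderiv_fun_mul hg hh, ContinuousLinearMap.add_apply,
    ContinuousLinearMap.smul_apply, smul_eq_mul]

lemma Xd_const_mul (v : V) (a : ℝ) (hg : DifferentiableAt ℝ g x) :
    Xd ω v (fun y => a * g y) x = a * Xd ω v g x := by
  simp only [Xd_eq, fderiv_const_mul hg, ContinuousLinearMap.smul_apply, smul_eq_mul]

lemma Zd_Ld {n : ℕ} (e : OrthonormalBasis (Fin n) ℝ V) (hf : ContDiff ℝ (⊤ : ℕ∞) f) (c : C) (x : V × C) :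
    Zd c (Ld ω e f) x = ∑ i, Xd ω (e i) (Xd ω (e i) (Zd c f)) x := by
  have h1 : Zd c (Ld ω e f) x = ∑ i, Zd c (Xd ω (e i) (Xd ω (e i) f)) x := by
    apply Zd_sum
    intro i _
    exact ((contDiff_Xd ω (contDiff_Xd ω hf (e i)) (e i)).differentiable (by simp) x)
  rw [h1]
  refine Finset.sum_congr rfl fun i _ => ?_
  rw [Zd_Xd ω (contDiff_Xd ω hf (e i)) (e i) c x]
  congr 1
  funext y
  exact Zd_Xd ω hf (e i) c y


lemma gamma2Z_eq {n d : ℕ} (e : OrthonormalBasis (Fin n) ℝ V) (fb : OrthonormalBasis (Fin d) ℝ C)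
    (hf : ContDiff ℝ (⊤ : ℕ∞) f) (x : V × C) :
    Gamma2Z ω e fb f x = ∑ j, ∑ ℓ, (Xd ω (e j) (Zd (fb ℓ) f) x) ^ 2 := by
  set g : Fin d → (V × C → ℝ) := fun ℓ => Zd (fb ℓ) f with hgdef
  have hgs : ∀ ℓ, ContDiff ℝ (⊤ : ℕ∞) (g ℓ) := fun ℓ => contDiff_Zd hf (fb ℓ)
  have hgd : ∀ (ℓ) (y : V × C), DifferentiableAt ℝ (g ℓ) y :=
    fun ℓ y => (hgs ℓ).differentiable (by simp) y
  have hXgd : ∀ (v : V) (ℓ) (y : V × C), DifferentiableAt ℝ (Xd ω v (g ℓ)) y :=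
    fun v ℓ y => (contDiff_Xd ω (hgs ℓ) v).differentiable (by simp) y
  have stepA : ∀ (v : V) (y : V × C),
      Xd ω v (GammaZ fb f f) y = ∑ ℓ, (2 * g ℓ y * Xd ω v (g ℓ) y) := by
    intro v y
    rw [show GammaZ fb f f = (fun z => ∑ ℓ, g ℓ z * g ℓ z) from rfl]
    rw [Xd_sum ω Finset.univ (fun ℓ => fun z => g ℓ z * g ℓ z) v
      (fun ℓ _ => (hgd ℓ y).mul (hgd ℓ y))]
    refine Finset.sum_congr rfl fun ℓ _ => ?_
    rw [Xd_mul ω v (hgd ℓ y) (hgd ℓ y)]; ring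
  have stepB : ∀ i, Xd ω (e i) (Xd ω (e i) (GammaZ fb f f)) x
      = ∑ ℓ, (2 * Xd ω (e i) (g ℓ) x * Xd ω (e i) (g ℓ) x
          + 2 * g ℓ x * Xd ω (e i) (Xd ω (e i) (g ℓ)) x) := by
    intro i
    have hrw : Xd ω (e i) (GammaZ fb f f)
        = fun y => ∑ ℓ, (2 * g ℓ y * Xd ω (e i) (g ℓ) y) := funext (stepA (e i))
    rw [hrw]
    rw [Xd_sum ω Finset.univ (fun ℓ => fun y => 2 * g ℓ y * Xd ω (e i) (g ℓ) y) (e i)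
      (fun ℓ _ => (((hgd ℓ x).const_mul 2).mul (hXgd (e i) ℓ x)))]
    refine Finset.sum_congr rfl fun ℓ _ => ?_
    rw [Xd_mul ω (e i) ((hgd ℓ x).const_mul 2) (hXgd (e i) ℓ x),
      Xd_const_mul ω (e i) 2 (hgd ℓ x)]
    ring
  have stepC : GammaZ fb f (Ld ω e f) x
      = ∑ ℓ, g ℓ x * ∑ i, Xd ω (e i) (Xd ω (e i) (g ℓ)) x := by
    refine Finset.sum_congr rfl fun ℓ _ => ?_
    rw [Zd_Ld ω e hf (fb ℓ) x]
  have hL : Ld ω e (GammaZ fb f f) x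
      = ∑ i, ∑ ℓ, (2 * Xd ω (e i) (g ℓ) x * Xd ω (e i) (g ℓ) x
          + 2 * g ℓ x * Xd ω (e i) (Xd ω (e i) (g ℓ)) x) :=
    Finset.sum_congr rfl fun i _ => stepB i
  show (1 / 2 : ℝ) * (Ld ω e (GammaZ fb f f) x - 2 * GammaZ fb f (Ld ω e f) x) = _
  rw [hL, stepC]
  have hswap : ∑ ℓ, g ℓ x * ∑ i, Xd ω (e i) (Xd ω (e i) (g ℓ)) x
      = ∑ i, ∑ ℓ, g ℓ x * Xd ω (e i) (Xd ω (e i) (g ℓ)) x := by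
    rw [Finset.sum_comm]
    exact Finset.sum_congr rfl fun ℓ _ => Finset.mul_sum _ _ _
  rw [hswap]
  rw [Finset.mul_sum, ← Finset.sum_sub_distrib, Finset.mul_sum]
  refine Finset.sum_congr rfl fun i _ => ?_
  rw [Finset.mul_sum, ← Finset.sum_sub_distrib, Finset.mul_sum]
  refine Finset.sum_congr rfl fun ℓ _ => ?_
  ring


lemma parseval {d : ℕ} (fb : OrthonormalBasis (Fin d) ℝ C) (c : C) :
    ∑ ℓ, (inner ℝ (fb ℓ) c : ℝ) ^ 2 = ‖c‖ ^ 2 := by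
  have h := fb.sum_inner_mul_inner c c
  rw [real_inner_self_eq_norm_sq] at h
  rw [← h]
  refine Finset.sum_congr rfl fun ℓ _ => ?_
  rw [real_inner_comm (fb ℓ) c, sq]

lemma Xd_Zd_expand {d : ℕ} (fb : OrthonormalBasis (Fin d) ℝ C) (hf : ContDiff ℝ (⊤ : ℕ∞) f)
    (v : V) (c : C) (x : V × C) :
    Xd ω v (Zd c f) x = ∑ ℓ, (inner ℝ (fb ℓ) c : ℝ) * Xd ω v (Zd (fb ℓ) f) x := by
  rw [Xd_Zd ω hf v c x]
  have hc : (((0 : V), c) : V × C)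
      = ∑ ℓ, (inner ℝ (fb ℓ) c : ℝ) • (((0 : V), fb ℓ) : V × C) := by
    apply Prod.ext
    · simp [Prod.fst_sum]
    · simp only [Prod.snd_sum, Prod.smul_snd]
      exact (fb.sum_repr' c).symm
  rw [hc, map_sum]
  refine Finset.sum_congr rfl fun ℓ _ => ?_
  rw [map_smul, smul_eq_mul, ← Xd_Zd ω hf v (fb ℓ) x]

end HeisAux

/-- (i) `Γ₂^Z(f)(x) = Σ_{j,ℓ} (X_j Z_ℓ f (x))²`, and
(ii) `Σ_j (Σ_i X_i(W_{ij} f)(x))² ≤ ‖ω‖₂² Γ₂^Z(f)(x)` on the finite-dimensional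
Heisenberg-like group `G = V × 𝐂`. -/
theorem gamma2Z_eq_and_bound {n d : ℕ}
    (ω : V →L[ℝ] V →L[ℝ] C) (hskew : ∀ v w : V, ω v w = -ω w v)
    (e : OrthonormalBasis (Fin n) ℝ V) (fb : OrthonormalBasis (Fin d) ℝ C)
    (f : V × C → ℝ) (hf : ContDiff ℝ (⊤ : ℕ∞) f) (x : V × C) :
    Gamma2Z ω e fb f x = (∑ j, ∑ ℓ, (Xd ω (e j) (Zd (fb ℓ) f) x) ^ 2) ∧
    (∑ j, (∑ i, Xd ω (e i) (Wd ω (e i) (e j) f) x) ^ 2)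
      ≤ (∑ i, ∑ j, ‖ω (e i) (e j)‖ ^ 2) * Gamma2Z ω e fb f x := by
  have hi := HeisAux.gamma2Z_eq ω e fb hf x
  refine ⟨hi, ?_⟩
  set T := ∑ j, ∑ ℓ, (Xd ω (e j) (Zd (fb ℓ) f) x) ^ 2 with hT
  have hW : ∀ i j, Xd ω (e i) (Wd ω (e i) (e j) f) x
      = ∑ ℓ, (inner ℝ (fb ℓ) (ω (e i) (e j)) : ℝ) * Xd ω (e i) (Zd (fb ℓ) f) x :=
    fun i j => HeisAux.Xd_Zd_expand ω fb hf (e i) (ω (e i) (e j)) x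
  have key : ∀ j, (∑ i, Xd ω (e i) (Wd ω (e i) (e j) f) x) ^ 2
      ≤ (∑ i, ‖ω (e i) (e j)‖ ^ 2) * T := by
    intro j
    have hrw : (∑ i, Xd ω (e i) (Wd ω (e i) (e j) f) x)
        = ∑ p : Fin n × Fin d, (inner ℝ (fb p.2) (ω (e p.1) (e j)) : ℝ)
            * Xd ω (e p.1) (Zd (fb p.2) f) x := by
      rw [Fintype.sum_prod_type]
      exact Finset.sum_congr rfl fun i _ => hW i j
    have cs := Finset.sum_mul_sq_le_sq_mul_sq Finset.univ
      (fun p : Fin n × Fin d => (inner ℝ (fb p.2) (ω (e p.1) (e j)) : ℝ))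
      (fun p : Fin n × Fin d => Xd ω (e p.1) (Zd (fb p.2) f) x)
    rw [hrw]
    refine le_trans cs (le_of_eq ?_)
    congr 1
    · rw [Fintype.sum_prod_type]
      exact Finset.sum_congr rfl fun i _ => HeisAux.parseval fb (ω (e i) (e j))
    · rw [hT, Fintype.sum_prod_type]
  calc ∑ j, (∑ i, Xd ω (e i) (Wd ω (e i) (e j) f) x) ^ 2
      ≤ ∑ j, (∑ i, ‖ω (e i) (e j)‖ ^ 2) * T := Finset.sum_le_sum fun j _ => key j
    _ = (∑ i, ∑ j, ‖ω (e i) (e j)‖ ^ 2) * T := by rw [← Finset.sum_mul, Finset.sum_comm]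
    _ = (∑ i, ∑ j, ‖ω (e i) (e j)‖ ^ 2) * Gamma2Z ω e fb f x := by rw [hi]
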